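/- Let R = ℂ[E₁,E₂] with the derivations e, f, h as above and δ = 4E₂ − E₁². Then for every integer j ≥ 1, the family (f^r(δʲ))_{r ∈ ℕ} is linearly independent over ℂ. (Together with e(δʲ) = 0 and h(δʲ) = −4j·δʲ, this says that δʲ generates a copy of the Verma module of highest weight −4j inside R.) -/

import Mathlib

/-!
The derivations `e`, `f`, `h` form an `sl₂`-triple in the Lie algebra of derivations of `R`, and
`δʲ` is a primitive vector of weight `μ = -4j`: it is an `h`-eigenvector killed by `e`. The
`sl₂` relations give `e (f^(n+1) δʲ) = (n+1)(μ-n) f^n δʲ`; as `μ` is not a natural number these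
coefficients never vanish, so no `f^n δʲ` is zero. They are `h`-eigenvectors with the distinct
eigenvalues `μ - 2n`, hence linearly independent.
-/

open MvPolynomial

namespace IsSl2Triple.HasPrimitiveVectorWith

variable {R L M : Type*} [CommRing R] [LieRing L] [LieAlgebra R L]
  [AddCommGroup M] [Module R M] [LieRingModule L M] [LieModule R L M]
  {h e f : L} {t : IsSl2Triple h e f} {m : M} {μ : R}
  [CharZero R] [IsDomain R] [Module.IsTorsionFree R M]

lemma pow_toEnd_f_ne_zero_of_forall_ne_nat (P : t.HasPrimitiveVectorWith m μ)
    (hμ : ∀ n : ℕ, μ ≠ n) (n : ℕ) : (LieModule.toEnd R L M f ^ n) m ≠ 0 := by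
  induction n with
  | zero => simpa using P.ne_zero
  | succ n ih =>
    intro H
    have hcoeff : ((n + 1) * (μ - n) : R) ≠ 0 :=
      mul_ne_zero (Nat.cast_add_one_ne_zero n) (sub_ne_zero.mpr (hμ n))
    have := P.lie_e_pow_succ_toEnd_f n
    rw [H, lie_zero, eq_comm, smul_eq_zero] at this
    exact this.elim hcoeff ih

lemma linearIndependent_pow_toEnd_f (P : t.HasPrimitiveVectorWith m μ) (hμ : ∀ n : ℕ, μ ≠ n) :
    LinearIndependent R fun n : ℕ ↦ (LieModule.toEnd R L M f ^ n) m :=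
  Module.End.eigenvectors_linearIndependent' (LieModule.toEnd R L M h) (fun n : ℕ ↦ μ - 2 * n)
    (fun a b hab ↦ by simpa using hab) _ fun n ↦
      ⟨Module.End.mem_eigenspace_iff.mpr (P.lie_h_pow_toEnd_f n),
        P.pow_toEnd_f_ne_zero_of_forall_ne_nat hμ n⟩

end IsSl2Triple.HasPrimitiveVectorWith

namespace Derivation

variable {R A : Type*} [CommRing R] [CommRing A] [Algebra R A] (D : Derivation R A A)

@[simp]
lemma map_ofNat (n : ℕ) [n.AtLeastTwo] : D (ofNat(n) : A) = 0 :=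
  D.map_natCast n

variable {D}

lemma apply_pow_of_apply_eq_smul {a : A} {c : R} (ha : D a = c • a) (n : ℕ) :
    D (a ^ n) = (n * c) • a ^ n := by
  induction n with
  | zero => simp
  | succ n ih =>
    rw [pow_succ, leibniz, ih, ha]
    simp only [smul_eq_mul, Algebra.mul_smul_comm]
    rw [mul_comm a]
    push_cast
    module

end Derivation

section

variable {e f h : Derivation ℂ (MvPolynomial (Fin 2) ℂ) (MvPolynomial (Fin 2) ℂ)}
  (he1 : e (X 0) = -2) (he2 : e (X 1) = -X 0)
  (hf1 : f (X 0) = X 0 ^ 2 - 2 * X 1) (hf2 : f (X 1) = X 0 * X 1)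
  (hh1 : h (X 0) = -2 * X 0) (hh2 : h (X 1) = -4 * X 1)
include he1 he2 hf1 hf2 hh1 hh2

lemma isSl2Triple_of_apply_X : IsSl2Triple h e f where
  h_ne_zero H := by simpa [H] using congrArg (eval ![1, 0]) hh1
  lie_e_f := by
    refine derivation_ext (Fin.forall_fin_two.mpr ⟨?_, ?_⟩) <;>
    simp [Derivation.commutator_apply, Derivation.leibniz, *] <;> ring
  lie_h_e_nsmul := by
    refine derivation_ext (Fin.forall_fin_two.mpr ⟨?_, ?_⟩)
    · simp [Derivation.commutator_apply, Derivation.leibniz, *]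
    · simp [Derivation.commutator_apply, Derivation.leibniz, *]; ring
  lie_h_f_nsmul := by
    refine derivation_ext (Fin.forall_fin_two.mpr ⟨?_, ?_⟩) <;>
    simp [Derivation.commutator_apply, Derivation.leibniz, *] <;> ring

lemma delta_pow_hasPrimitiveVectorWith (j : ℕ) :
    (isSl2Triple_of_apply_X he1 he2 hf1 hf2 hh1 hh2).HasPrimitiveVectorWith
      ((4 * X 1 - X 0 ^ 2) ^ j : MvPolynomial (Fin 2) ℂ) (-4 * j : ℂ) := by
  have hδ : (4 * X 1 - X 0 ^ 2 : MvPolynomial (Fin 2) ℂ) ≠ 0 := fun H ↦ by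
    simpa using congrArg (eval ![0, 1]) H
  have hhδ : h (4 * X 1 - X 0 ^ 2) = (-4 : ℂ) • (4 * X 1 - X 0 ^ 2) := by
    simp [Derivation.leibniz, Derivation.leibniz_pow, smul_eq_C_mul, map_ofNat C, *]; ring
  have heδ : e (4 * X 1 - X 0 ^ 2) = 0 := by
    simp [Derivation.leibniz, Derivation.leibniz_pow, *]; ring
  refine ⟨pow_ne_zero j hδ, ?_, ?_⟩
  · rw [Derivation.bracket_eq_fun, Derivation.apply_pow_of_apply_eq_smul hhδ, mul_comm]
  · rw [Derivation.bracket_eq_fun, Derivation.leibniz_pow, heδ, smul_zero, smul_zero]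

end

theorem f_iterates_on_delta_power_linearIndependent
    (e f h : Derivation ℂ (MvPolynomial (Fin 2) ℂ) (MvPolynomial (Fin 2) ℂ))
    (he1 : e (X 0) = -2) (he2 : e (X 1) = -X 0)
    (hf1 : f (X 0) = X 0 ^ 2 - 2 * X 1) (hf2 : f (X 1) = X 0 * X 1)
    (hh1 : h (X 0) = -2 * X 0) (hh2 : h (X 1) = -4 * X 1)
    (δ : MvPolynomial (Fin 2) ℂ) (hδ : δ = 4 * X 1 - X 0 ^ 2)
    (j : ℕ) (hj : 1 ≤ j) :
    LinearIndependent ℂ (fun r : ℕ => (f.toLinearMap ^ r) (δ ^ j)) := by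
  subst hδ
  have hweight (n : ℕ) : (-4 * j : ℂ) ≠ n := fun H ↦ by
    have : ((n + 4 * j : ℕ) : ℂ) = 0 := by push_cast; linear_combination -H
    rw [Nat.cast_eq_zero] at this
    omega
  exact (delta_pow_hasPrimitiveVectorWith he1 he2 hf1 hf2 hh1 hh2 j).linearIndependent_pow_toEnd_f
    hweight
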